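/- arXiv:2403.01604 — 3 statements merged into one kernel-verified Lean document; each statement's English description precedes it below -/
import Mathlib

section
/- For a subset A of a topological space X, A is e*-open if and only if the e*-closure of A is e*-regular (i.e., both e*-open and e*-closed). -/
open Set Topology

variable {X : Type*} [TopologicalSpace X]

/-- δ-closure of A. -/
def deltaCl (A : Set X) : Set X :=
  {x | ∀ U : Set X, IsOpen U → x ∈ U → (interior (closure U) ∩ A).Nonempty}

/-- A is e*-open if A ⊆ cl(int(δ-cl A)). -/
def EStarOpen (A : Set X) : Prop := A ⊆ closure (interior (deltaCl A))

/-- A is e*-closed if its complement is e*-open. -/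
def EStarClosed (A : Set X) : Prop := EStarOpen Aᶜ

/-- e*-closure: intersection of all e*-closed supersets. -/
def eStarCl (A : Set X) : Set X := ⋂₀ {F | EStarClosed F ∧ A ⊆ F}

/-- e*-interior: union of all e*-open subsets. -/
def eStarInt (A : Set X) : Set X := ⋃₀ {U | EStarOpen U ∧ U ⊆ A}

/-- e*-regular: both e*-open and e*-closed. -/
def EStarRegular (A : Set X) : Prop := EStarOpen A ∧ EStarClosed A

/-- e*-θ-closure. -/
def eStarClTheta (A : Set X) : Set X :=
  {x | ∀ U : Set X, EStarOpen U → x ∈ U → (eStarCl U ∩ A).Nonempty}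

/-- e*-θ-closed. -/
def EStarThetaClosed (A : Set X) : Prop := A = eStarClTheta A

/-- e*-θ-open. -/
def EStarThetaOpen (A : Set X) : Prop := EStarThetaClosed Aᶜ

/-- quasi e*-θ-closed. -/
def QEStarThetaClosed (A : Set X) : Prop :=
  ∀ U : Set X, EStarThetaOpen U → A ⊆ U → eStarClTheta A ⊆ U

/-- e*-θ-kernel. -/
def eStarKerTheta (A : Set X) : Set X := ⋂₀ {U | EStarThetaOpen U ∧ A ⊆ U}

/-! The e*-closure of `A` lies between `A` and `deltaCl A`, and δ-closure is idempotent, so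
`A` and `eStarCl A` have the same δ-closure. As `closure (interior (deltaCl A))` is closed,
hence e*-closed, both `EStarOpen A` and `EStarOpen (eStarCl A)` then say
`eStarCl A ⊆ closure (interior (deltaCl A))`. -/

lemma subset_deltaCl (A : Set X) : A ⊆ deltaCl A :=
  fun x hx _ hU hxU ↦ ⟨x, interior_mono subset_closure (hU.interior_eq.symm ▸ hxU), hx⟩

lemma deltaCl_mono {A B : Set X} (h : A ⊆ B) : deltaCl A ⊆ deltaCl B := by
  intro x hx U hU hxU
  obtain ⟨y, hyU, hyA⟩ := hx U hU hxU
  exact ⟨y, hyU, h hyA⟩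

lemma isClosed_deltaCl (A : Set X) : IsClosed (deltaCl A) := by
  refine isOpen_compl_iff.mp (isOpen_iff_forall_mem_open.mpr fun x hx ↦ ?_)
  simp only [deltaCl, mem_compl_iff, mem_ofPred_eq, not_forall] at hx
  obtain ⟨U, hU, hxU, hempty⟩ := hx
  exact ⟨U, fun y hyU hy ↦ hempty (hy U hU hyU), hU, hxU⟩

lemma deltaCl_deltaCl (A : Set X) : deltaCl (deltaCl A) = deltaCl A := by
  refine (deltaCl_mono (subset_deltaCl A)).antisymm' fun x hx U hU hxU ↦ ?_
  obtain ⟨y, hyU, hyA⟩ := hx U hU hxU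
  obtain ⟨z, hzU, hzA⟩ := hyA _ isOpen_interior hyU
  exact ⟨z, by rwa [interior_closure_idem] at hzU, hzA⟩

lemma IsOpen.eStarOpen {U : Set X} (hU : IsOpen U) : EStarOpen U :=
  (interior_maximal (subset_deltaCl U) hU).trans subset_closure

lemma IsClosed.eStarClosed {F : Set X} (hF : IsClosed F) : EStarClosed F :=
  hF.isOpen_compl.eStarOpen

lemma eStarOpen_sUnion {S : Set (Set X)} (hS : ∀ U ∈ S, EStarOpen U) : EStarOpen (⋃₀ S) := by
  rintro x ⟨U, hUS, hxU⟩
  exact closure_mono (interior_mono (deltaCl_mono (subset_sUnion_of_mem hUS))) (hS U hUS hxU)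

lemma eStarClosed_sInter {S : Set (Set X)} (hS : ∀ F ∈ S, EStarClosed F) :
    EStarClosed (⋂₀ S) := by
  rw [EStarClosed, compl_sInter]
  exact eStarOpen_sUnion (forall_mem_image.mpr hS)

lemma subset_eStarCl (A : Set X) : A ⊆ eStarCl A :=
  fun _ hx _ hF ↦ hF.2 hx

lemma eStarCl_minimal {A F : Set X} (hF : EStarClosed F) (h : A ⊆ F) : eStarCl A ⊆ F :=
  sInter_subset_of_mem ⟨hF, h⟩

lemma eStarClosed_eStarCl (A : Set X) : EStarClosed (eStarCl A) :=
  eStarClosed_sInter fun _ hF ↦ hF.1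

lemma deltaCl_eStarCl (A : Set X) : deltaCl (eStarCl A) = deltaCl A := by
  have hsub : eStarCl A ⊆ deltaCl A :=
    eStarCl_minimal (isClosed_deltaCl A).eStarClosed (subset_deltaCl A)
  refine (deltaCl_mono (subset_eStarCl A)).antisymm' ?_
  simpa only [deltaCl_deltaCl] using deltaCl_mono hsub

lemma eStarOpen_eStarCl_iff (A : Set X) : EStarOpen (eStarCl A) ↔ EStarOpen A := by
  rw [EStarOpen, EStarOpen, deltaCl_eStarCl]
  exact ⟨(subset_eStarCl A).trans, eStarCl_minimal isClosed_closure.eStarClosed⟩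

theorem stmt0 (A : Set X) : EStarOpen A ↔ EStarRegular (eStarCl A) := by
  rw [EStarRegular, eStarOpen_eStarCl_iff, and_iff_left (eStarClosed_eStarCl A)]
end

section
/- For a subset A of a topological space X, A is e*-closed if and only if the e*-interior of A is e*-regular. -/
/-!
The e*-interior of `A` is `A ∩ R` with `R = cl (int (δ-cl A))` a closed set, and it is always
e*-open. Its complement `Aᶜ ∪ Rᶜ` lies between `Aᶜ` and `cl Aᶜ`, because `int A ⊆ R`. Since the
δ-closure of a set equals that of its closure, `Aᶜ ∪ Rᶜ` is e*-open exactly when `Aᶜ` is.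
-/

open Set Topology

variable {X : Type*} [TopologicalSpace X]

lemma deltaCl_closure (A : Set X) : deltaCl (closure A) = deltaCl A := by
  refine subset_antisymm (fun x hx U hU hxU => ?_) (deltaCl_mono subset_closure)
  obtain ⟨y, hyU, hyA⟩ := hx U hU hxU
  exact mem_closure_iff.mp hyA _ isOpen_interior hyU

lemma IsOpen.inter_deltaCl_subset {U : Set X} (hU : IsOpen U) (A : Set X) :
    U ∩ deltaCl A ⊆ deltaCl (A ∩ closure U) := by
  rintro y ⟨hyU, hyA⟩ V hV hyV
  obtain ⟨a, haVU, haA⟩ := hyA (V ∩ U) (hV.inter hU) ⟨hyV, hyU⟩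
  have haU : a ∈ closure U := interior_subset (interior_mono (closure_mono inter_subset_right) haVU)
  exact ⟨a, interior_mono (closure_mono inter_subset_left) haVU, haA, haU⟩

lemma EStarOpen.union {A B : Set X} (hA : EStarOpen A) (hB : EStarOpen B) :
    EStarOpen (A ∪ B) :=
  union_subset (hA.trans (closure_mono (interior_mono (deltaCl_mono subset_union_left))))
    (hB.trans (closure_mono (interior_mono (deltaCl_mono subset_union_right))))

lemma EStarOpen.of_subset_closure {A B : Set X} (hB : EStarOpen B) (hAB : A ⊆ B)
    (hBA : B ⊆ closure A) : EStarOpen A := by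
  have hδ : deltaCl B ⊆ deltaCl A := deltaCl_closure A ▸ deltaCl_mono hBA
  exact (hAB.trans hB).trans (closure_mono (interior_mono hδ))

lemma eStarOpen_inter_closure_interior_deltaCl (A : Set X) :
    EStarOpen (A ∩ closure (interior (deltaCl A))) := by
  have hδ : interior (deltaCl A) ⊆ deltaCl (A ∩ closure (interior (deltaCl A))) := fun x hx =>
    isOpen_interior.inter_deltaCl_subset A ⟨hx, interior_subset hx⟩
  exact inter_subset_right.trans (closure_mono (interior_maximal hδ isOpen_interior))

lemma eStarInt_eq (A : Set X) : eStarInt A = A ∩ closure (interior (deltaCl A)) :=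
  subset_antisymm
    (sUnion_subset fun _ ⟨hU, hUA⟩ =>
      subset_inter hUA (hU.trans (closure_mono (interior_mono (deltaCl_mono hUA)))))
    (subset_sUnion_of_mem ⟨eStarOpen_inter_closure_interior_deltaCl A, inter_subset_left⟩)

theorem stmt1 (A : Set X) : EStarClosed A ↔ EStarRegular (eStarInt A) := by
  simp only [EStarRegular, EStarClosed, eStarInt_eq, compl_inter]
  set R := closure (interior (deltaCl A))
  refine ⟨fun hA => ⟨eStarOpen_inter_closure_interior_deltaCl A,
    hA.union isClosed_closure.isOpen_compl.eStarOpen⟩, fun ⟨_, hAR⟩ => ?_⟩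
  have hRA : Rᶜ ⊆ closure Aᶜ := by
    rw [closure_compl, compl_subset_compl]
    exact (interior_mono (subset_deltaCl A)).trans subset_closure
  exact hAR.of_subset_closure subset_union_left (union_subset subset_closure hRA)
end

section
/- In the topological space X = {1,2,3} with topology {∅, X, {1}, {2}, {1,2}}, the sets {1} and {2} are e*-θ-closed but their union {1,2} is not e*-θ-closed. -/
open Set Topology

variable {X : Type*} [TopologicalSpace X]

lemma eStarOpen_of_subset_closure_interior {A : Set X} (h : A ⊆ closure (interior A)) :
    EStarOpen A :=
  h.trans (closure_mono (interior_mono (subset_deltaCl A)))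

lemma EStarClosed.eStarCl_subset {A : Set X} (h : EStarClosed A) : eStarCl A ⊆ A :=
  sInter_subset_of_mem ⟨h, subset_rfl⟩

lemma mem_eStarClTheta_of_forall {A : Set X} {x : X}
    (h : ∀ U, EStarOpen U → x ∈ U → (U ∩ A).Nonempty) : x ∈ eStarClTheta A :=
  fun U hU hxU => (h U hU hxU).mono (inter_subset_inter_left A (subset_eStarCl U))

lemma subset_eStarClTheta (A : Set X) : A ⊆ eStarClTheta A :=
  fun x hx => mem_eStarClTheta_of_forall fun _ _ hxU => ⟨x, hxU, hx⟩

lemma EStarRegular.eStarThetaClosed {A : Set X} (h : EStarRegular A) : EStarThetaClosed A := by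
  refine (subset_eStarClTheta A).antisymm fun x hx => by_contra fun hxA => ?_
  have hclosed : EStarClosed Aᶜ := by
    rw [EStarClosed, compl_compl]
    exact h.1
  obtain ⟨y, hyU, hyA⟩ := hx Aᶜ h.2 hxA
  exact hclosed.eStarCl_subset hyU hyA

abbrev fin3Top : TopologicalSpace (Fin 3) := TopologicalSpace.generateFrom {{0}, {1}}

section Fin3

attribute [local instance] fin3Top

lemma isOpen_singleton_of_ne_two {x : Fin 3} (hx : x ≠ 2) : IsOpen ({x} : Set (Fin 3)) := by
  apply TopologicalSpace.GenerateOpen.basic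
  fin_cases x <;> simp_all

lemma eq_univ_of_isOpen_of_two_mem {U : Set (Fin 3)} (hU : IsOpen U) (h2 : 2 ∈ U) :
    U = univ := by
  induction hU with
  | basic s hs => rcases hs with rfl | rfl <;> simp at h2
  | univ => rfl
  | inter s t _ _ ihs iht => rw [ihs h2.1, iht h2.2, inter_univ]
  | sUnion S _ ih =>
    obtain ⟨s, hsS, h2s⟩ := h2
    exact eq_univ_of_univ_subset ((ih s hsS h2s).symm.subset.trans (subset_sUnion_of_mem hsS))

lemma two_mem_closure {s : Set (Fin 3)} (hs : s.Nonempty) : 2 ∈ closure s :=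
  mem_closure_iff.mpr fun U hU h2U => by rwa [eq_univ_of_isOpen_of_two_mem hU h2U, univ_inter]

lemma eq_univ_of_two_mem_interior {s : Set (Fin 3)} (h : 2 ∈ interior s) : s = univ :=
  eq_univ_of_univ_subset <|
    (eq_univ_of_isOpen_of_two_mem isOpen_interior h).symm.subset.trans interior_subset

lemma exists_ne_two_ne (x : Fin 3) : ∃ y : Fin 3, y ≠ 2 ∧ y ≠ x := by
  fin_cases x <;> decide

lemma not_dense_singleton (x : Fin 3) : ¬ Dense ({x} : Set (Fin 3)) := by
  intro hd
  obtain ⟨y, hy, hyx⟩ := exists_ne_two_ne x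
  obtain ⟨z, hzy, hzx⟩ := hd.inter_open_nonempty {y} (isOpen_singleton_of_ne_two hy)
    (singleton_nonempty y)
  exact hyx ((eq_of_mem_singleton hzy).symm.trans hzx)

lemma deltaCl_singleton_two : deltaCl ({2} : Set (Fin 3)) ⊆ {2} := by
  intro x hx
  by_contra hx2
  obtain ⟨z, hz, rfl⟩ := hx {x} (isOpen_singleton_of_ne_two hx2) rfl
  exact not_dense_singleton x (dense_iff_closure_eq.mpr (eq_univ_of_two_mem_interior hz))

lemma interior_singleton_two : interior ({2} : Set (Fin 3)) = ∅ := by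
  refine eq_empty_of_forall_notMem fun x hx => ?_
  obtain rfl : x = 2 := mem_singleton_iff.mp (interior_subset hx)
  have h0 : (0 : Fin 3) ∈ ({2} : Set (Fin 3)) := by
    rw [eq_univ_of_two_mem_interior hx]
    trivial
  exact absurd h0 (by decide)

lemma mem_interior_of_ne_two {s : Set (Fin 3)} {x : Fin 3} (hx : x ≠ 2) (hxs : x ∈ s) :
    x ∈ interior s :=
  interior_maximal (singleton_subset_iff.mpr hxs) (isOpen_singleton_of_ne_two hx) rfl

lemma exists_mem_ne_two {s : Set (Fin 3)} (hs : s ≠ {2}) (h2 : 2 ∈ s) : ∃ y ∈ s, y ≠ 2 := by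
  by_contra! h
  exact hs (eq_singleton_iff_unique_mem.mpr ⟨h2, h⟩)

lemma eStarOpen_iff_ne_singleton_two {s : Set (Fin 3)} : EStarOpen s ↔ s ≠ {2} := by
  constructor
  · rintro hs rfl
    have hempty : interior (deltaCl {2}) = (∅ : Set (Fin 3)) :=
      subset_empty_iff.mp (interior_singleton_two ▸ interior_mono deltaCl_singleton_two)
    simpa [hempty] using hs (mem_singleton 2)
  · intro hs
    refine eStarOpen_of_subset_closure_interior fun x hx => ?_
    by_cases hx2 : x = 2
    · subst hx2
      obtain ⟨y, hys, hy⟩ := exists_mem_ne_two hs hx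
      exact two_mem_closure ⟨y, mem_interior_of_ne_two hy hys⟩
    · exact subset_closure (mem_interior_of_ne_two hx2 hx)

lemma eStarThetaClosed_singleton_of_ne_two {x : Fin 3} (hx : x ≠ 2) :
    EStarThetaClosed ({x} : Set (Fin 3)) := by
  refine EStarRegular.eStarThetaClosed ⟨eStarOpen_iff_ne_singleton_two.mpr (by simpa using hx),
    eStarOpen_iff_ne_singleton_two.mpr fun h => ?_⟩
  obtain ⟨y, hy, hyx⟩ := exists_ne_two_ne x
  have hyc : y ∈ ({x}ᶜ : Set (Fin 3)) := hyx
  rw [h] at hyc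
  exact hy hyc

lemma not_eStarThetaClosed_zero_one : ¬ EStarThetaClosed ({0, 1} : Set (Fin 3)) := by
  intro h
  have h2 : (2 : Fin 3) ∈ eStarClTheta {0, 1} := mem_eStarClTheta_of_forall fun U hU h2U => by
    obtain ⟨y, hyU, hy⟩ := exists_mem_ne_two (eStarOpen_iff_ne_singleton_two.mp hU) h2U
    exact ⟨y, hyU, by fin_cases y <;> simp_all⟩
  rw [← h] at h2
  simp at h2

end Fin3

theorem stmt6 :
    letI τ : TopologicalSpace (Fin 3) := TopologicalSpace.generateFrom {{0}, {1}}
    @EStarThetaClosed (Fin 3) τ {0} ∧ @EStarThetaClosed (Fin 3) τ {1} ∧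
      ¬ @EStarThetaClosed (Fin 3) τ {0, 1} :=
  ⟨eStarThetaClosed_singleton_of_ne_two (by decide),
    eStarThetaClosed_singleton_of_ne_two (by decide), not_eStarThetaClosed_zero_one⟩
end
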